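/- In the Maximal Covering Network Design problem, the projection onto the design and coverage variables (x,y,z) of the feasible set where flow variables f are required to be binary equals the projection of the feasible set where flow variables are only required to be nonnegative reals. -/

import Mathlib

/-!
A nonnegative flow `g` of value `c > 0` from `s` to `t` contains a vertex-simple `s`–`t` path `l`
made of arcs with positive flow and with `c · cost l ≤ cost g`. Such a path exists: otherwise
the vertices reachable from `s` along these arcs would form a set containing `s` but not `t`
that no flow leaves, while its net outflow must be `c`. Let `ε` be the least flow on `l`. If
`c ≤ ε`, then `l` works. Otherwise `g - ε · 1_l` is a flow of value `c - ε` with a smaller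
support, so by induction it contains a path `l'`, and the cheaper of `l` and `l'` works.

A commodity with `z = 1` is routed in one unit along such a path. The path only uses edges with
positive flow, and these have `x_e = 1`. A simple path never uses both orientations of an edge,
so the capacities hold.
-/

namespace Stmt2

variable {V E W : Type*}

/-- Source of an arc: an arc is an edge together with an orientation. -/
def arcSrc (ends : E → V × V) : E × Bool → V
  | (e, true) => (ends e).1
  | (e, false) => (ends e).2

/-- Destination of an arc. -/
def arcDst (ends : E → V × V) : E × Bool → V
  | (e, true) => (ends e).2
  | (e, false) => (ends e).1

/-- Divergence (net outflow) of `f` at vertex `v`. -/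
def divg [Fintype E] [DecidableEq V] (ends : E → V × V) (f : E × Bool → ℝ) (v : V) : ℝ :=
  (∑ a : E × Bool, if arcSrc ends a = v then f a else 0)
    - (∑ a : E × Bool, if arcDst ends a = v then f a else 0)

/-- All constraints of the Maximal Covering Network Design formulation except the
integrality / nonnegativity requirement on the flow variables `f`. -/
def MCFeasCore [Fintype V] [Fintype E] [Fintype W] [DecidableEq V]
    (ends : E → V × V) (c : E → ℝ) (b : V → ℝ) (d : E × Bool → ℝ)
    (u : W → ℝ) (orig dest : W → V) (Cmax : ℝ)
    (x : E → ℝ) (y : V → ℝ) (z : W → ℝ) (f : W → E × Bool → ℝ) : Prop :=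
  ((∑ e : E, c e * x e) + (∑ i : V, b i * y i) ≤ Cmax) ∧
  (∀ e : E, x e ≤ y (ends e).1 ∧ x e ≤ y (ends e).2) ∧
  (∀ e : E, x e = 0 ∨ x e = 1) ∧ (∀ i : V, y i = 0 ∨ y i = 1) ∧
  (∀ w : W, z w = 0 ∨ z w = 1) ∧
  (∀ (w : W) (v : V), divg ends (f w) v =
      if v = orig w then z w else if v = dest w then -(z w) else 0) ∧
  (∀ (w : W) (e : E), f w (e, true) + f w (e, false) ≤ x e) ∧
  (∀ w : W, ∑ a : E × Bool, d a * f w a ≤ u w * z w)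

inductive IsWalk (ends : E → V × V) (P : E × Bool → Prop) : V → V → List (E × Bool) → Prop
  | nil (v : V) : IsWalk ends P v v []
  | cons {u w : V} {a : E × Bool} {l : List (E × Bool)} :
      P a → arcSrc ends a = u → IsWalk ends P (arcDst ends a) w l → IsWalk ends P u w (a :: l)

theorem arcDst_not (ends : E → V × V) (e : E) (b : Bool) :
    arcDst ends (e, !b) = arcSrc ends (e, b) := by
  cases b <;> rfl

namespace IsWalk

variable {ends : E → V × V} {P Q : E × Bool → Prop} {u w : V} {l : List (E × Bool)}

theorem mono (hPQ : ∀ a, P a → Q a) (h : IsWalk ends P u w l) : IsWalk ends Q u w l := by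
  induction h with
  | nil v => exact nil v
  | cons ha hsrc _ ih => exact cons (hPQ _ ha) hsrc ih

theorem of_mem (h : IsWalk ends P u w l) {a : E × Bool} (ha : a ∈ l) : P a := by
  induction h with
  | nil => simp at ha
  | cons hb _ _ ih =>
    rcases List.mem_cons.1 ha with rfl | ha
    exacts [hb, ih ha]

theorem concat (h : IsWalk ends P u w l) {a : E × Bool} (ha : P a) (hsrc : arcSrc ends a = w) :
    IsWalk ends P u (arcDst ends a) (l ++ [a]) := by
  induction h with
  | nil v => exact cons ha hsrc (nil _)
  | cons hb hsrc' _ ih => exact cons hb hsrc' (ih hsrc)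

theorem exists_suffix (h : IsWalk ends P u w l) {x : V} (hx : x ∈ u :: l.map (arcDst ends)) :
    ∃ l', IsWalk ends P x w l' ∧ (x :: l'.map (arcDst ends)) <:+ (u :: l.map (arcDst ends)) := by
  induction h with
  | nil v =>
    obtain rfl : x = v := by simpa using hx
    exact ⟨[], nil x, List.suffix_refl _⟩
  | @cons u' w' a l' ha hsrc hw ih =>
    rcases List.mem_cons.1 hx with rfl | hx
    · exact ⟨a :: l', cons ha hsrc hw, List.suffix_refl _⟩
    · obtain ⟨l'', hw'', hsuf⟩ := ih (by simpa using hx)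
      exact ⟨l'', hw'', hsuf.trans (List.suffix_cons _ _)⟩

theorem exists_nodup (h : IsWalk ends P u w l) :
    ∃ l', IsWalk ends P u w l' ∧ (u :: l'.map (arcDst ends)).Nodup := by
  induction h with
  | nil v => exact ⟨[], nil v, by simp⟩
  | @cons u' w' a l' ha hsrc _ ih =>
    obtain ⟨l₂, hw₂, hnd₂⟩ := ih
    by_cases hu : u' ∈ arcDst ends a :: l₂.map (arcDst ends)
    · obtain ⟨l₃, hw₃, hsuf⟩ := hw₂.exists_suffix hu
      exact ⟨l₃, hw₃, hsuf.sublist.nodup hnd₂⟩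
    · exact ⟨a :: l₂, cons ha hsrc hw₂, List.nodup_cons.2 ⟨hu, hnd₂⟩⟩

theorem not_mem_of_mem_not (h : IsWalk ends P u w l) (hnd : (u :: l.map (arcDst ends)).Nodup)
    {e : E} {b : Bool} (hb : (e, !b) ∈ l) : (e, b) ∉ l := by
  induction h with
  | nil => simp at hb
  | @cons u' w' a l' _ hsrc _ ih =>
    rw [List.map_cons, List.nodup_cons, List.mem_cons, not_or] at hnd
    have hdst : ∀ a' ∈ l', arcDst ends a' ≠ u' := fun a' ha' h' =>
      hnd.1.2 (h' ▸ List.mem_map_of_mem ha')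
    rw [List.mem_cons]
    rintro (rfl | hb')
    · rcases List.mem_cons.1 hb with h' | h'
      · simp at h'
      · exact hdst _ h' (by rw [arcDst_not, hsrc])
    · rcases List.mem_cons.1 hb with rfl | h'
      · exact hdst _ hb' (by rw [← hsrc, ← arcDst_not, Bool.not_not])
      · exact ih hnd.2 h' hb'

end IsWalk

section Divergence

variable [DecidableEq V]

def unitDivg (s t : V) : V → ℝ := Pi.single s 1 - Pi.single t 1

theorem unitDivg_add_unitDivg (s v t : V) : unitDivg s v + unitDivg v t = unitDivg s t := by
  simp only [unitDivg]; abel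

theorem sum_unitDivg_apply (s t : V) (S : Finset V) :
    ∑ x ∈ S, unitDivg s t x = (if s ∈ S then 1 else 0) - (if t ∈ S then 1 else 0) := by
  simp [unitDivg, Finset.sum_sub_distrib, Finset.sum_pi_single']

theorem unitDivg_apply_of_ne {s t : V} (hst : s ≠ t) (v : V) :
    unitDivg s t v = if v = s then 1 else if v = t then -1 else 0 := by
  rcases eq_or_ne v s with rfl | hs
  · simp [unitDivg, hst]
  rcases eq_or_ne v t with rfl | ht
  · simp [unitDivg, hs]
  · simp [unitDivg, hs, ht]

variable {ends : E → V × V}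

theorem IsWalk.sum_unitDivg {P : E × Bool → Prop} {s t : V} {l : List (E × Bool)}
    (h : IsWalk ends P s t l) :
    (l.map fun a => unitDivg (arcSrc ends a) (arcDst ends a)).sum = unitDivg s t := by
  induction h with
  | nil v => simp [unitDivg]
  | cons _ hsrc _ ih => rw [List.map_cons, List.sum_cons, ih, hsrc, unitDivg_add_unitDivg]

variable [Fintype E]

theorem divg_eq_sum (f : E × Bool → ℝ) :
    divg ends f = ∑ a, f a • unitDivg (arcSrc ends a) (arcDst ends a) := by
  ext v
  simp only [divg, unitDivg, Finset.sum_apply, Pi.smul_apply, Pi.sub_apply, Pi.single_apply,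
    smul_eq_mul, mul_sub, Finset.sum_sub_distrib, mul_ite, mul_one, mul_zero, eq_comm]

theorem divg_sub (f g : E × Bool → ℝ) : divg ends (f - g) = divg ends f - divg ends g := by
  simp only [divg_eq_sum, Pi.sub_apply, sub_smul, Finset.sum_sub_distrib]

theorem divg_smul (c : ℝ) (f : E × Bool → ℝ) : divg ends (c • f) = c • divg ends f := by
  simp only [divg_eq_sum, Pi.smul_apply, smul_eq_mul, mul_smul, Finset.smul_sum]

theorem sum_divg (f : E × Bool → ℝ) (S : Finset V) :
    ∑ x ∈ S, divg ends f x =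
      ∑ a, f a * ((if arcSrc ends a ∈ S then 1 else 0) - (if arcDst ends a ∈ S then 1 else 0)) := by
  simp only [divg_eq_sum, Finset.sum_apply, Pi.smul_apply, smul_eq_mul]
  rw [Finset.sum_comm]
  simp only [← Finset.mul_sum, sum_unitDivg_apply]

end Divergence

def pathFlow {α : Type*} [DecidableEq α] (l : List α) : α → ℝ := fun a => if a ∈ l then 1 else 0

@[simp]
theorem pathFlow_nil {α : Type*} [DecidableEq α] : pathFlow ([] : List α) = 0 := by
  ext; simp [pathFlow]

theorem pathFlow_eq_zero_or_one {α : Type*} [DecidableEq α] (l : List α) (a : α) :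
    pathFlow l a = 0 ∨ pathFlow l a = 1 := by
  unfold pathFlow; split_ifs <;> simp

theorem smul_pathFlow_le {α : Type*} [DecidableEq α] {l : List α} {g : α → ℝ} (hg : 0 ≤ g)
    {c : ℝ} (hc : ∀ a ∈ l, c ≤ g a) : c • pathFlow l ≤ g := fun a => by
  by_cases ha : a ∈ l
  · simpa [pathFlow, ha] using hc a ha
  · simpa [pathFlow, ha] using hg a

theorem IsWalk.divg_pathFlow [Fintype E] [DecidableEq E] [DecidableEq V] {ends : E → V × V}
    {P : E × Bool → Prop} {s t : V} {l : List (E × Bool)} (h : IsWalk ends P s t l)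
    (hnd : l.Nodup) : divg ends (pathFlow l) = unitDivg s t := by
  rw [divg_eq_sum, ← h.sum_unitDivg, ← List.sum_toFinset _ hnd]
  simp only [pathFlow, ite_smul, one_smul, zero_smul, ← List.mem_toFinset, Finset.sum_ite_mem,
    Finset.univ_inter]

theorem card_filter_pos_sub_lt {α : Type*} [Fintype α] {g h : α → ℝ} (hh : ∀ a, 0 ≤ h a) {a₀ : α}
    (ha₀ : 0 < g a₀) (heq : h a₀ = g a₀) :
    (Finset.univ.filter fun a => 0 < (g - h) a).card <
      (Finset.univ.filter fun a => 0 < g a).card := by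
  refine Finset.card_lt_card ((Finset.ssubset_iff_of_subset fun a => ?_).2 ⟨a₀, ?_, ?_⟩)
  · simp only [Finset.mem_filter, Finset.mem_univ, true_and, Pi.sub_apply]
    exact fun h' => by linarith [hh a]
  · simpa using ha₀
  · simp [heq]

section Paths

variable [Fintype V] [Fintype E] [DecidableEq V] {ends : E → V × V}

theorem exists_isWalk_of_divg_eq {g : E × Bool → ℝ} (hg : 0 ≤ g) {c : ℝ} (hc : 0 < c)
    {s t : V} (hdiv : divg ends g = c • unitDivg s t) :
    ∃ l, IsWalk ends (fun a => 0 < g a) s t l := by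
  classical
  by_contra hnot
  set S := Finset.univ.filter fun x => ∃ l, IsWalk ends (fun a => 0 < g a) s x l
  have hs : s ∈ S := by simpa [S] using ⟨[], IsWalk.nil s⟩
  have ht : t ∉ S := by simpa [S] using hnot
  have hclosed : ∀ a, 0 < g a → arcSrc ends a ∈ S → arcDst ends a ∈ S := by
    simp only [S, Finset.mem_filter, Finset.mem_univ, true_and]
    exact fun a ha ⟨l, hl⟩ => ⟨_, hl.concat ha rfl⟩
  have hout : ∑ x ∈ S, divg ends g x = c := by
    simp [hdiv, ← Finset.mul_sum, sum_unitDivg_apply, hs, ht]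
  have hout_nonpos : ∑ x ∈ S, divg ends g x ≤ 0 := by
    rw [sum_divg]
    refine Finset.sum_nonpos fun a _ => ?_
    rcases (show (0 : ℝ) ≤ g a from hg a).eq_or_lt with h0 | hpos
    · simp [← h0]
    by_cases hsrc : arcSrc ends a ∈ S
    · simp [hsrc, hclosed a hpos hsrc]
    · simp only [hsrc, if_false, zero_sub]
      split_ifs <;> linarith
  linarith

theorem exists_path_cost_le [DecidableEq E] {d : E × Bool → ℝ} (hd : 0 ≤ d)
    {g : E × Bool → ℝ} (hg : 0 ≤ g) {c : ℝ} (hc : 0 < c) {s t : V}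
    (hdiv : divg ends g = c • unitDivg s t) :
    ∃ l, IsWalk ends (fun a => 0 < g a) s t l ∧ (s :: l.map (arcDst ends)).Nodup ∧
      c * (d ⬝ᵥ pathFlow l) ≤ d ⬝ᵥ g := by
  induction hn : (Finset.univ.filter fun a => 0 < g a).card using Nat.strong_induction_on
    generalizing g c with
  | _ n ih =>
  obtain ⟨l, hl, hnd⟩ := (exists_isWalk_of_divg_eq hg hc hdiv).elim fun _ h => h.exists_nodup
  have hl_nodup : l.Nodup := (List.nodup_cons.1 hnd).2.of_map _
  by_cases hl0 : l = []
  · subst hl0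
    refine ⟨[], hl, hnd, ?_⟩
    simpa using dotProduct_nonneg_of_nonneg hd hg
  obtain ⟨a₀, ha₀, hmin⟩ := l.toFinset.exists_min_image g (List.toFinset_nonempty_iff _ |>.2 hl0)
  rw [List.mem_toFinset] at ha₀
  replace hmin : ∀ a ∈ l, g a₀ ≤ g a := fun a ha => hmin a (List.mem_toFinset.2 ha)
  rcases le_or_gt c (g a₀) with hc_le | hlt
  · refine ⟨l, hl, hnd, ?_⟩
    rw [← smul_eq_mul, ← dotProduct_smul]
    exact dotProduct_le_dotProduct_of_nonneg_left
      (smul_pathFlow_le hg fun a ha => hc_le.trans (hmin a ha)) hd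
  have hsub_nonneg : 0 ≤ g a₀ • pathFlow l := smul_nonneg (hl.of_mem ha₀).le fun a => by
    rcases pathFlow_eq_zero_or_one l a with h | h <;> simp [h]
  set g' := g - g a₀ • pathFlow l
  have hg' : 0 ≤ g' := sub_nonneg.2 (smul_pathFlow_le hg hmin)
  have hdiv' : divg ends g' = (c - g a₀) • unitDivg s t := by
    rw [divg_sub, divg_smul, hdiv, hl.divg_pathFlow hl_nodup, sub_smul]
  have hcard : (Finset.univ.filter fun a => 0 < g' a).card < n :=
    hn ▸ card_filter_pos_sub_lt hsub_nonneg (hl.of_mem ha₀) (by simp [pathFlow, ha₀])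
  obtain ⟨l', hl', hnd', hcost'⟩ := ih _ hcard hg' (sub_pos.2 hlt) hdiv' rfl
  -- `(c - g a₀) * cost l' + g a₀ * cost l ≤ d ⬝ᵥ g`, so the cheaper of `l` and `l'` will do.
  have hcost_g' : d ⬝ᵥ g' = d ⬝ᵥ g - g a₀ * (d ⬝ᵥ pathFlow l) := by
    rw [dotProduct_sub, dotProduct_smul, smul_eq_mul]
  have hpos : 0 < g a₀ := hl.of_mem ha₀
  rcases le_total (d ⬝ᵥ pathFlow l) (d ⬝ᵥ pathFlow l') with h | h
  · exact ⟨l, hl, hnd, by nlinarith⟩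
  · exact ⟨l', hl'.mono fun a ha => ha.trans_le (sub_le_self _ hsub_nonneg a), hnd', by nlinarith⟩

end Paths

theorem exists_binary_flow [Fintype V] [Fintype E] [DecidableEq V] {ends : E → V × V}
    {d : E × Bool → ℝ} (hd : ∀ a, 0 ≤ d a) {x : E → ℝ} (hx : ∀ e, x e = 0 ∨ x e = 1)
    {s t : V} (hst : s ≠ t) {z U : ℝ} (hz : z = 0 ∨ z = 1) {g : E × Bool → ℝ} (hg : ∀ a, 0 ≤ g a)
    (hdiv : ∀ v, divg ends g v = if v = s then z else if v = t then -z else 0)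
    (hcap : ∀ e, g (e, true) + g (e, false) ≤ x e) (hcost : ∑ a, d a * g a ≤ U * z) :
    ∃ g' : E × Bool → ℝ,
      (∀ v, divg ends g' v = if v = s then z else if v = t then -z else 0) ∧
      (∀ e, g' (e, true) + g' (e, false) ≤ x e) ∧ (∑ a, d a * g' a ≤ U * z) ∧
      ∀ a, g' a = 0 ∨ g' a = 1 := by
  classical
  have hx_nonneg : ∀ e, 0 ≤ x e := fun e => by rcases hx e with h | h <;> simp [h]
  rcases hz with rfl | rfl
  · refine ⟨0, fun v => ?_, fun e => by simpa using hx_nonneg e, by simp, fun _ => Or.inl rfl⟩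
    simp [divg_eq_sum]
  have hdiv' : divg ends g = (1 : ℝ) • unitDivg s t := by
    ext v; rw [hdiv, one_smul, unitDivg_apply_of_ne hst]
  obtain ⟨l, hl, hnd, hlen⟩ := exists_path_cost_le hd hg one_pos hdiv'
  refine ⟨pathFlow l, fun v => ?_, fun e => ?_, ?_, pathFlow_eq_zero_or_one l⟩
  · rw [hl.divg_pathFlow (List.nodup_cons.1 hnd).2.of_map, unitDivg_apply_of_ne hst]
  · rcases hx e with h0 | h1
    · have hnot : ∀ b, (e, b) ∉ l := fun b hb => by
        have := hl.of_mem hb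
        cases b <;> linarith [hg (e, true), hg (e, false), hcap e]
      simp [pathFlow, hnot, h0]
    · by_cases htrue : (e, true) ∈ l
      · simp [pathFlow, htrue, hl.not_mem_of_mem_not hnd (b := false) htrue, h1]
      · by_cases hfalse : (e, false) ∈ l <;> simp [pathFlow, htrue, hfalse, h1]
  · exact (one_mul _).symm.trans_le hlen |>.trans hcost

/-- the projection onto `(x, y, z)` of the feasible set of (MC) with
binary flow variables equals the projection of the feasible set with flow variables
only required to be nonnegative. -/
theorem projection_eq [Fintype V] [Fintype E] [Fintype W] [DecidableEq V]
    (ends : E → V × V) (c : E → ℝ) (b : V → ℝ) (d : E × Bool → ℝ)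
    (u : W → ℝ) (orig dest : W → V) (Cmax : ℝ)
    (hd : ∀ a, 0 ≤ d a) (hod : ∀ w, orig w ≠ dest w) :
    {p : (E → ℝ) × (V → ℝ) × (W → ℝ) |
        ∃ f : W → E × Bool → ℝ,
          MCFeasCore ends c b d u orig dest Cmax p.1 p.2.1 p.2.2 f ∧
          ∀ (w : W) (a : E × Bool), f w a = 0 ∨ f w a = 1} =
    {p : (E → ℝ) × (V → ℝ) × (W → ℝ) |
        ∃ f : W → E × Bool → ℝ,
          MCFeasCore ends c b d u orig dest Cmax p.1 p.2.1 p.2.2 f ∧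
          ∀ (w : W) (a : E × Bool), 0 ≤ f w a} := by
  ext ⟨x, y, z⟩
  simp only [Set.mem_ofPred_eq]
  constructor
  · rintro ⟨f, hf, hbin⟩
    exact ⟨f, hf, fun w a => by rcases hbin w a with h | h <;> simp [h]⟩
  · rintro ⟨f, ⟨hbudget, hxy, hx, hy, hz, hdiv, hcap, hcost⟩, hf⟩
    choose f' hdiv' hcap' hcost' hbin' using fun w =>
      exists_binary_flow hd hx (hod w) (hz w) (hf w) (hdiv w) (hcap w) (hcost w)
    exact ⟨f', ⟨hbudget, hxy, hx, hy, hz, hdiv', hcap', hcost'⟩, hbin'⟩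

end Stmt2
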